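/- The DDIM posterior mean formula equals the DDPM posterior mean formula: for ε̂ := (x_t - sqrt(ᾱ_t) x̂_0)/sqrt(1-ᾱ_t), one has sqrt(ᾱ_{t-1}) x̂_0 + sqrt(1-ᾱ_{t-1}-σ_t²) ε̂ = (sqrt(ᾱ_{t-1})(1-α_t)/(1-ᾱ_t)) x̂_0 + (sqrt(α_t)(1-ᾱ_{t-1})/(1-ᾱ_t)) x_t, where σ_t² = (1-α_t)(1-ᾱ_{t-1})/(1-ᾱ_t). -/

import Mathlib

/-!
Since `ᾱ_t = α_t ᾱ_{t-1}`, the DDIM noise coefficient is a perfect square,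
`1 - ᾱ_{t-1} - σ_t² = α_t (1 - ᾱ_{t-1})² / (1 - ᾱ_t)`, so its square root is
`√α_t (1 - ᾱ_{t-1}) / √(1 - ᾱ_t)`. Substituting `ε̂` and comparing the coefficients of `x̂_0`
and `x_t` then reduces the claim to two rational identities.
-/

open Real

lemma one_sub_sub_posterior_variance {α ab1 ab : ℝ} (hab : ab = α * ab1) (h : 1 - ab ≠ 0) :
    1 - ab1 - (1 - α) * (1 - ab1) / (1 - ab) = α * (1 - ab1) ^ 2 / (1 - ab) := by
  rw [eq_div_iff h, sub_mul, div_mul_cancel₀ _ h, hab]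
  ring

lemma sqrt_one_sub_sub_posterior_variance {α ab1 ab : ℝ} (hα : 0 ≤ α) (hab1 : ab1 ≤ 1)
    (hab : ab = α * ab1) (h : ab < 1) :
    √(1 - ab1 - (1 - α) * (1 - ab1) / (1 - ab)) = √α * (1 - ab1) / √(1 - ab) := by
  rw [one_sub_sub_posterior_variance hab (sub_ne_zero.2 h.ne'), sqrt_div' _ (sub_nonneg.2 h.le),
    sqrt_mul hα, sqrt_sq (sub_nonneg.2 hab1)]

theorem stmt_2 {E : Type*} [NormedAddCommGroup E] [NormedSpace ℝ E]
    (xt x0hat : E) (αt ab1 ab σsq : ℝ)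
    (hαt : 0 < αt ∧ αt < 1) (hab1 : 0 < ab1 ∧ ab1 < 1)
    (hab : ab = αt * ab1)
    (hσ : σsq = (1 - αt) * (1 - ab1) / (1 - ab))
    (εhat : E)
    (hε : εhat = (Real.sqrt (1 - ab))⁻¹ • (xt - Real.sqrt ab • x0hat)) :
    Real.sqrt ab1 • x0hat + Real.sqrt (1 - ab1 - σsq) • εhat
      = (Real.sqrt ab1 * (1 - αt) / (1 - ab)) • x0hat
        + (Real.sqrt αt * (1 - ab1) / (1 - ab)) • xt := by
  obtain ⟨hαt0, hαt1⟩ := hαt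
  obtain ⟨-, hab11⟩ := hab1
  have hab_lt : ab < 1 := hab ▸ mul_lt_one_of_nonneg_of_lt_one_left hαt0.le hαt1 hab11.le
  have h1ab : 1 - ab ≠ 0 := by linarith
  have hsqrt_ne : √(1 - ab) ≠ 0 := by positivity
  have hsq : √(1 - ab) ^ 2 = 1 - ab := sq_sqrt (by linarith)
  have hsq_α : √αt ^ 2 = αt := sq_sqrt hαt0.le
  have hsqrt_ab : √ab = √αt * √ab1 := by rw [hab, sqrt_mul hαt0.le]
  rw [hε, hσ, sqrt_one_sub_sub_posterior_variance hαt0.le hab11.le hab hab_lt, hsqrt_ab]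
  match_scalars
  · field_simp
    rw [hsq, hsq_α, hab]
    ring
  · field_simp
    rw [hsq]
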